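/- Let d ≥ 3 be an integer and let C = { x ∈ [0,1/2]^d : there exists an index i with x_i ≥ 1/π }. Then 2^d · ∫_C 1/(2d − 2·Σ_{i=1}^d cos(2π x_i)) dx ≤ 1/((1 − cos 2)·(1 − 2/π)) · 1/(d+1); in particular this quantity is at most 3/d. -/

import Mathlib

/-!
Split `C` according to the set `S` of coordinates with `x i ≥ 1/π`: this cuts `C` into the boxes
`∏_{i ∈ S} [1/π, 1/2] × ∏_{i ∉ S} [0, 1/π)` with `S ≠ ∅`, of volume `a^|S| b^(d-|S|)` where
`a = 1/2 - 1/π` and `b = 1/π`. On such a box `2πx_i ∈ [2, π]` for `i ∈ S`, so the denominator is at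
least `2|S|(1 - cos 2) ≥ (|S| + 1)(1 - cos 2)`. Summing over `S`, the factor `1/(|S| + 1)` turns
the binomial expansion of `(a + b)^d` into `((a + b)^(d+1) - b^(d+1)) / ((d + 1) a)`, and
`a + b = 1/2` absorbs the factor `2^d`.
-/

open Real MeasureTheory Finset

theorem add_one_mul_mul_sum_choose_mul_pow_div (n : ℕ) (a b : ℝ) :
    (n + 1) * a * ∑ k ∈ range (n + 1), (n.choose k : ℝ) * (a ^ k * b ^ (n - k) / (k + 1))
      = (a + b) ^ (n + 1) - b ^ (n + 1) := by
  have hterm (k : ℕ) : (n + 1) * a * ((n.choose k : ℝ) * (a ^ k * b ^ (n - k) / (k + 1)))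
      = ((n + 1).choose (k + 1) : ℝ) * (a ^ (k + 1) * b ^ (n - k)) := by
    have hchoose : ((n : ℝ) + 1) * n.choose k = (n + 1).choose (k + 1) * ((k : ℝ) + 1) := by
      exact_mod_cast Nat.add_one_mul_choose_eq n k
    field_simp
    linear_combination (a ^ (k + 1) * b ^ (n - k)) * hchoose
  rw [mul_sum, sum_congr rfl fun k _ ↦ hterm k, add_pow, sum_range_succ' _ (n + 1)]
  simp [mul_comm]

theorem sum_pow_mul_pow_div_card_add_one_le {ι : Type*} [Fintype ι] {a b : ℝ} (ha : 0 < a)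
    (hb : 0 ≤ b) :
    ∑ S : Finset ι, a ^ #S * b ^ (Fintype.card ι - #S) / (#S + 1)
      ≤ (a + b) ^ (Fintype.card ι + 1) / ((Fintype.card ι + 1) * a) := by
  rw [le_div_iff₀ (by positivity), ← powerset_univ,
    sum_powerset_apply_card (fun k ↦ a ^ k * b ^ (Fintype.card ι - k) / ((k : ℝ) + 1)),
    card_univ, mul_comm]
  simp only [nsmul_eq_mul]
  rw [add_one_mul_mul_sum_choose_mul_pow_div]
  linarith [pow_nonneg hb (Fintype.card ι + 1)]

section SplitBox

variable {ι : Type*} [DecidableEq ι]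

def splitBox (l t u : ℝ) (S : Finset ι) : Set (ι → ℝ) :=
  Set.univ.pi fun i ↦ if i ∈ S then Set.Icc t u else Set.Ico l t

variable {l t u : ℝ}

theorem apply_mem_Icc_of_mem_splitBox {S : Finset ι} {x : ι → ℝ} (hx : x ∈ splitBox l t u S)
    {i : ι} (hi : i ∈ S) : x i ∈ Set.Icc t u := by
  simpa [hi] using hx i (Set.mem_univ i)

theorem apply_mem_Ico_of_mem_splitBox {S : Finset ι} {x : ι → ℝ} (hx : x ∈ splitBox l t u S)
    {i : ι} (hi : i ∉ S) : x i ∈ Set.Ico l t := by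
  simpa [hi] using hx i (Set.mem_univ i)

theorem pairwise_disjoint_splitBox :
    Pairwise (Function.onFun Disjoint (splitBox l t u : Finset ι → Set (ι → ℝ))) := by
  intro S T hST
  rw [Function.onFun, Set.disjoint_left]
  intro x hxS hxT
  obtain ⟨i, hi⟩ := symmDiff_nonempty.mpr hST
  rcases mem_symmDiff.mp hi with ⟨hS, hT⟩ | ⟨hT, hS⟩
  · exact (apply_mem_Ico_of_mem_splitBox hxT hT).2.not_ge (apply_mem_Icc_of_mem_splitBox hxS hS).1
  · exact (apply_mem_Ico_of_mem_splitBox hxS hS).2.not_ge (apply_mem_Icc_of_mem_splitBox hxT hT).1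

variable [Fintype ι]

theorem measurableSet_splitBox (S : Finset ι) : MeasurableSet (splitBox l t u S) :=
  MeasurableSet.univ_pi fun i ↦ by
    split_ifs
    exacts [measurableSet_Icc, measurableSet_Ico]

theorem volume_splitBox (S : Finset ι) :
    volume (splitBox l t u S) = ENNReal.ofReal (u - t) ^ #S * ENNReal.ofReal (t - l) ^ #Sᶜ := by
  rw [splitBox, volume_pi_pi]
  simp only [apply_ite, Real.volume_Icc, Real.volume_Ico]
  rw [prod_ite, prod_const, prod_const, filter_mem_eq_inter, univ_inter, filter_not,
    filter_mem_eq_inter, univ_inter, compl_eq_univ_sdiff]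

theorem measureReal_splitBox (hlt : l ≤ t) (htu : t ≤ u) (S : Finset ι) :
    volume.real (splitBox l t u S) = (u - t) ^ #S * (t - l) ^ (Fintype.card ι - #S) := by
  rw [measureReal_def, volume_splitBox, ENNReal.toReal_mul, ENNReal.toReal_pow,
    ENNReal.toReal_pow, ENNReal.toReal_ofReal (by linarith), ENNReal.toReal_ofReal (by linarith),
    card_compl]

theorem volume_splitBox_ne_top (S : Finset ι) : volume (splitBox l t u S) ≠ ⊤ := by
  rw [volume_splitBox]
  finiteness

theorem setOf_forall_mem_Icc_exists_le_eq_biUnion_splitBox (hlt : l ≤ t) (htu : t ≤ u) :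
    {x : ι → ℝ | (∀ i, x i ∈ Set.Icc l u) ∧ ∃ i, t ≤ x i}
      = ⋃ S ∈ ({S | S.Nonempty} : Finset (Finset ι)), splitBox l t u S := by
  ext x
  simp only [Set.mem_ofPred_eq, Set.mem_iUnion, mem_filter, mem_univ, true_and, exists_prop]
  constructor
  · rintro ⟨hbox, i₀, hi₀⟩
    refine ⟨({i | t ≤ x i} : Finset ι), ⟨i₀, by simpa using hi₀⟩, Set.mem_univ_pi.mpr fun i ↦ ?_⟩
    by_cases h : t ≤ x i
    · rw [if_pos (by simpa using h)]
      exact ⟨h, (hbox i).2⟩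
    · rw [if_neg (by simpa using h)]
      exact ⟨(hbox i).1, lt_of_not_ge h⟩
  · rintro ⟨S, ⟨i₀, hi₀⟩, hx⟩
    refine ⟨fun i ↦ ?_, i₀, (apply_mem_Icc_of_mem_splitBox hx hi₀).1⟩
    by_cases hi : i ∈ S
    · have hxi := apply_mem_Icc_of_mem_splitBox hx hi
      exact ⟨hlt.trans hxi.1, hxi.2⟩
    · have hxi := apply_mem_Ico_of_mem_splitBox hx hi
      exact ⟨hxi.1, hxi.2.le.trans htu⟩

end SplitBox

section ReciprocalBound

variable {α : Type*} [MeasurableSpace α] {μ : Measure α} {s : Set α} {D : α → ℝ} {c : ℝ}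

theorem norm_one_div_le_one_div_of_le {y : ℝ} (hc : 0 < c) (h : c ≤ y) : ‖1 / y‖ ≤ 1 / c := by
  rw [norm_div, norm_one, Real.norm_of_nonneg (hc.trans_le h).le]
  exact one_div_le_one_div_of_le hc h

theorem integrableOn_one_div_of_le (hc : 0 < c) (hs : MeasurableSet s) (hμs : μ s ≠ ⊤)
    (hD : Measurable D) (hle : ∀ x ∈ s, c ≤ D x) : IntegrableOn (fun x ↦ 1 / D x) s μ :=
  Measure.integrableOn_of_bounded hμs (measurable_const.div hD).aestronglyMeasurable
    ((ae_restrict_iff' hs).mpr (.of_forall fun x hx ↦ norm_one_div_le_one_div_of_le hc (hle x hx)))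

theorem setIntegral_one_div_le_of_le (hc : 0 < c) (hμs : μ s ≠ ⊤) (hle : ∀ x ∈ s, c ≤ D x) :
    ∫ x in s, 1 / D x ∂μ ≤ μ.real s / c :=
  calc ∫ x in s, 1 / D x ∂μ ≤ ‖∫ x in s, 1 / D x ∂μ‖ := Real.le_norm_self _
    _ ≤ 1 / c * μ.real s := norm_setIntegral_le_of_norm_le_const hμs.lt_top
      fun x hx ↦ norm_one_div_le_one_div_of_le hc (hle x hx)
    _ = μ.real s / c := by ring

end ReciprocalBound

theorem card_add_one_mul_one_sub_cos_two_le_of_mem_splitBox {d : ℕ} {S : Finset (Fin d)}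
    (hS : S.Nonempty) {x : Fin d → ℝ} (hx : x ∈ splitBox 0 (1 / π) (1 / 2) S) :
    (#S + 1) * (1 - cos 2) ≤ 2 * d - 2 * ∑ i, cos (2 * π * x i) := by
  have hcos : ∀ i ∈ S, 1 - cos 2 ≤ 1 - cos (2 * π * x i) := by
    intro i hi
    have hxi := apply_mem_Icc_of_mem_splitBox hx hi
    rw [Set.mem_Icc, div_le_iff₀' pi_pos] at hxi
    have := cos_le_cos_of_nonneg_of_le_pi (y := 2 * π * x i) zero_le_two
      (by nlinarith [pi_pos]) (by linarith)
    linarith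
  have hS₁ : (1 : ℝ) ≤ #S := by exact_mod_cast hS.card_pos
  calc (#S + 1) * (1 - cos 2) ≤ 2 * ∑ _i ∈ S, (1 - cos 2) := by
        rw [sum_const, nsmul_eq_mul]
        nlinarith [cos_two_neg]
    _ ≤ 2 * ∑ i ∈ S, (1 - cos (2 * π * x i)) :=
        mul_le_mul_of_nonneg_left (sum_le_sum hcos) zero_le_two
    _ ≤ 2 * ∑ i, (1 - cos (2 * π * x i)) := by
        gcongr
        · exact fun i _ _ ↦ sub_nonneg.mpr (cos_le_one _)
        · exact subset_univ S
    _ = 2 * d - 2 * ∑ i, cos (2 * π * x i) := by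
        rw [sum_sub_distrib, sum_const, card_univ, Fintype.card_fin, nsmul_eq_mul]
        ring

theorem two_pow_mul_integral_regionC_le (d : ℕ) :
    (2 : ℝ) ^ d * ∫ x in {x : Fin d → ℝ | (∀ i, x i ∈ Set.Icc (0 : ℝ) (1 / 2)) ∧ ∃ i, 1 / π ≤ x i},
        1 / (2 * d - 2 * ∑ i, cos (2 * π * x i))
      ≤ 1 / ((1 - cos 2) * (1 - 2 / π)) * (1 / ((d : ℝ) + 1)) := by
  suffices h : ∫ x in {x : Fin d → ℝ | (∀ i, x i ∈ Set.Icc (0 : ℝ) (1 / 2)) ∧ ∃ i, 1 / π ≤ x i},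
      1 / (2 * d - 2 * ∑ i, cos (2 * π * x i))
        ≤ (1 / 2) ^ (d + 1) / ((d + 1) * (1 / 2 - 1 / π) * (1 - cos 2)) by
    refine (mul_le_mul_of_nonneg_left h (by positivity)).trans_eq ?_
    have : 1 - cos 2 ≠ 0 := by linarith [cos_two_neg]
    have : (2 : ℝ) < π := by linarith [pi_gt_three]
    rw [one_div_pow, pow_succ]
    field_simp
  set a : ℝ := 1 / 2 - 1 / π
  set b : ℝ := 1 / π
  set c : ℝ := 1 - cos 2
  have hb : 0 < b := by positivity
  have hba : b < 1 / 2 := by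
    rw [div_lt_div_iff₀ pi_pos two_pos]
    linarith [pi_gt_three]
  have ha : 0 < a := sub_pos.mpr hba
  have hc : 0 < c := by linarith [cos_two_neg]
  have hD : Measurable fun x : Fin d → ℝ ↦ 2 * d - 2 * ∑ i, cos (2 * π * x i) := by fun_prop
  have hc_le (S : Finset (Fin d)) (hS : S ∈ ({S | S.Nonempty} : Finset (Finset (Fin d))))
      (x : Fin d → ℝ) (hx : x ∈ splitBox 0 b (1 / 2) S) :
      (#S + 1) * c ≤ 2 * d - 2 * ∑ i, cos (2 * π * x i) :=
    card_add_one_mul_one_sub_cos_two_le_of_mem_splitBox (by simpa using hS) hx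
  rw [setOf_forall_mem_Icc_exists_le_eq_biUnion_splitBox hb.le hba.le,
    integral_biUnion_finset _ (fun S _ ↦ measurableSet_splitBox S)
      (pairwise_disjoint_splitBox.set_pairwise _) fun S hS ↦
      integrableOn_one_div_of_le (by positivity) (measurableSet_splitBox S)
        (volume_splitBox_ne_top S) hD (hc_le S hS)]
  calc _ ≤ ∑ S ∈ ({S | S.Nonempty} : Finset (Finset (Fin d))),
          a ^ #S * b ^ (d - #S) / ((#S + 1) * c) := by
        refine sum_le_sum fun S hS ↦ ?_
        refine (setIntegral_one_div_le_of_le (by positivity) (volume_splitBox_ne_top S)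
          (hc_le S hS)).trans_eq ?_
        rw [measureReal_splitBox hb.le hba.le, Fintype.card_fin, sub_zero]
    _ ≤ ∑ S : Finset (Fin d), a ^ #S * b ^ (d - #S) / ((#S + 1) * c) :=
        sum_le_sum_of_subset_of_nonneg (subset_univ _) fun _ _ _ ↦ by positivity
    _ = c⁻¹ * ∑ S : Finset (Fin d), a ^ #S * b ^ (d - #S) / (#S + 1) := by
        rw [mul_sum]
        exact sum_congr rfl fun S _ ↦ by field_simp
    _ ≤ c⁻¹ * ((a + b) ^ (d + 1) / ((d + 1) * a)) := by
        gcongr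
        simpa using sum_pow_mul_pow_div_card_add_one_le (ι := Fin d) ha hb.le
    _ = (1 / 2) ^ (d + 1) / ((d + 1) * a * c) := by
        rw [sub_add_cancel]
        field_simp

theorem one_div_one_sub_cos_two_mul_one_sub_two_div_pi_le_three :
    1 / ((1 - cos 2) * (1 - 2 / π)) ≤ 3 := by
  have h₁ : 1 ≤ 1 - cos 2 := by linarith [cos_two_neg]
  have h₂ : 1 / 3 ≤ 1 - 2 / π := by
    rw [le_sub_comm, div_le_iff₀ pi_pos]
    linarith [pi_gt_three]
  rw [div_le_iff₀ (by positivity)]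
  nlinarith

theorem integral_regionC_upper (d : ℕ) (hd : 3 ≤ d) :
    (2 : ℝ) ^ d * ∫ x in {x : Fin d → ℝ |
        (∀ i, x i ∈ Set.Icc (0 : ℝ) (1/2)) ∧ ∃ i, 1 / Real.pi ≤ x i},
        1 / (2 * d - 2 * ∑ i, Real.cos (2 * Real.pi * x i))
      ≤ 1 / ((1 - Real.cos 2) * (1 - 2 / Real.pi)) * (1 / ((d : ℝ) + 1)) ∧
    (2 : ℝ) ^ d * ∫ x in {x : Fin d → ℝ |
        (∀ i, x i ∈ Set.Icc (0 : ℝ) (1/2)) ∧ ∃ i, 1 / Real.pi ≤ x i},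
        1 / (2 * d - 2 * ∑ i, Real.cos (2 * Real.pi * x i))
      ≤ 3 / (d : ℝ) := by
  have h := two_pow_mul_integral_regionC_le d
  refine ⟨h, h.trans ?_⟩
  have hd₀ : (0 : ℝ) < d := by exact_mod_cast (by omega : 0 < d)
  calc 1 / ((1 - cos 2) * (1 - 2 / π)) * (1 / ((d : ℝ) + 1)) ≤ 3 * (1 / d) := by
        gcongr
        · exact one_div_one_sub_cos_two_mul_one_sub_two_div_pi_le_three
        · linarith
    _ = 3 / d := mul_one_div (3 : ℝ) d
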